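/- arXiv:2405.15344 — 3 statements merged into one kernel-verified Lean document; each statement's English description precedes it below -/
import Mathlib

section
/- Let η, η̃ ≥ 0 and let C_eq, C̃_eq > 0 with C_eq·C̃_eq ≥ 1, and let τ ≥ 0. Suppose for all subsets M of an index set T we have η_M ≤ C_eq(η̃_M + τ·η_T) and η̃_M ≤ C̃_eq(η_M + τ·η_T), where η_M² = Σ_{i∈M} η_i² and η̃_M² = Σ_{i∈M} η̃_i² for nonnegative families (η_i), (η̃_i). If θ_D ∈ (0,1], η_M ≥ θ_D·η_T, and τ ≤ θ_D/C_eq, then η̃_M ≥ θ̃_D·η̃_T with θ̃_D = (θ_D − C_eq·τ)/(C_eq·C̃_eq·(1+τ)). -/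
theorem stmt_4 {ι : Type*} (T : Finset ι) (η ηt : ι → ℝ)
    (hη : ∀ i, 0 ≤ η i) (hηt : ∀ i, 0 ≤ ηt i)
    (Ceq Ceqt τ : ℝ) (hCeq : 0 < Ceq) (hCeqt : 0 < Ceqt) (hprod : 1 ≤ Ceq * Ceqt)
    (hτ : 0 ≤ τ)
    (h1 : ∀ M ⊆ T, Real.sqrt (∑ i ∈ M, (η i)^2) ≤
      Ceq * (Real.sqrt (∑ i ∈ M, (ηt i)^2) + τ * Real.sqrt (∑ i ∈ T, (η i)^2)))
    (h2 : ∀ M ⊆ T, Real.sqrt (∑ i ∈ M, (ηt i)^2) ≤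
      Ceqt * (Real.sqrt (∑ i ∈ M, (η i)^2) + τ * Real.sqrt (∑ i ∈ T, (η i)^2)))
    (θD : ℝ) (hθD0 : 0 < θD) (hθD1 : θD ≤ 1)
    (M : Finset ι) (hM : M ⊆ T)
    (hmark : θD * Real.sqrt (∑ i ∈ T, (η i)^2) ≤ Real.sqrt (∑ i ∈ M, (η i)^2))
    (hτsmall : τ ≤ θD / Ceq) :
    ((θD - Ceq * τ) / (Ceq * Ceqt * (1 + τ))) * Real.sqrt (∑ i ∈ T, (ηt i)^2)
      ≤ Real.sqrt (∑ i ∈ M, (ηt i)^2) := by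
  set A := Real.sqrt (∑ i ∈ T, (η i)^2) with hA
  set a := Real.sqrt (∑ i ∈ M, (η i)^2) with ha
  set B := Real.sqrt (∑ i ∈ T, (ηt i)^2) with hB
  set b := Real.sqrt (∑ i ∈ M, (ηt i)^2) with hb
  have hAnn : 0 ≤ A := Real.sqrt_nonneg _
  have hBnn : 0 ≤ B := Real.sqrt_nonneg _
  have hbnn : 0 ≤ b := Real.sqrt_nonneg _
  have h1M : a ≤ Ceq * (b + τ * A) := h1 M hM
  have h2T : B ≤ Ceqt * (A + τ * A) := h2 T (le_refl _)
  have hnn : Ceq * τ ≤ θD := by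
    rw [le_div_iff₀ hCeq] at hτsmall; linarith [hτsmall]
  have hkey : (θD - Ceq * τ) * A ≤ Ceq * b := by nlinarith
  have hden : 0 < Ceq * Ceqt * (1 + τ) := by positivity
  rw [div_mul_eq_mul_div, div_le_iff₀ hden]
  nlinarith [mul_le_mul_of_nonneg_left h2T (sub_nonneg.mpr hnn),
    mul_le_mul_of_nonneg_left hkey (mul_nonneg hCeqt.le (by linarith : (0:ℝ) ≤ 1 + τ))]
end

section
/- Let δ > 0, β = 1/((1+δ^{-1})C_per²), and suppose nonnegative reals satisfy: (orthogonality) e_{n+1}² ≤ e_n² − E², (estimator reduction) η_{n+1}² ≤ (1+δ)(η_n² − (1−λ)μ_n²) + (1+δ^{-1})C_per²E², (Dörfler) μ_n ≥ θ·η_n with θ ∈ (0,1], and (upper bound) e_n ≤ C_up·η_n. Then for every t ∈ (0,1), e_{n+1}² + β·η_{n+1}² ≤ max{1 − β(1+δ)(1−λ)t(θ/C_up)², (1+δ)(1 − (1−λ)(1−t)θ²)}·(e_n² + β·η_n²). -/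
set_option maxHeartbeats 1000000 in
theorem stmt_9 (δ Cper lam θ Cup β : ℝ)
    (hδ : 0 < δ) (hCper : 0 < Cper) (hlam0 : 0 < lam) (hlam1 : lam < 1)
    (hθ0 : 0 < θ) (hθ1 : θ ≤ 1) (hCup : 0 < Cup)
    (hβ : β = 1 / ((1 + δ⁻¹) * Cper^2))
    (en en1 ηn ηn1 μn E : ℝ)
    (hen : 0 ≤ en) (hen1 : 0 ≤ en1) (hηn : 0 ≤ ηn) (hηn1 : 0 ≤ ηn1)
    (hμn : 0 ≤ μn) (hE : 0 ≤ E)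
    (horth : en1^2 ≤ en^2 - E^2)
    (hred : ηn1^2 ≤ (1+δ) * (ηn^2 - (1-lam) * μn^2) + (1+δ⁻¹) * Cper^2 * E^2)
    (hdorf : θ * ηn ≤ μn)
    (hup : en ≤ Cup * ηn) :
    ∀ t : ℝ, 0 < t → t < 1 →
      en1^2 + β * ηn1^2 ≤
        max (1 - β * (1+δ) * (1-lam) * t * (θ/Cup)^2)
            ((1+δ) * (1 - (1-lam) * (1-t) * θ^2)) * (en^2 + β * ηn^2) := by
  intro t ht0 ht1
  have hδi : 0 < (1 + δ⁻¹) := by positivity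
  have hden : 0 < (1 + δ⁻¹) * Cper^2 := by positivity
  have hβpos : 0 < β := by rw [hβ]; positivity
  have hβmul : β * ((1 + δ⁻¹) * Cper^2) = 1 := by
    rw [hβ]; field_simp
  -- combined estimate
  have hE2 : β * ((1 + δ⁻¹) * Cper^2) * E^2 = E^2 := by rw [hβmul]; ring
  have h1 : en1^2 + β * ηn1^2 ≤
      en^2 + β * (1+δ) * ηn^2 - β * (1+δ) * (1-lam) * μn^2 := by
    have h2 : β * ηn1^2 ≤
        β * (1+δ) * ηn^2 - β * (1+δ) * (1-lam) * μn^2 + E^2 := by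
      calc β * ηn1^2 ≤ β * ((1+δ) * (ηn^2 - (1-lam) * μn^2) + (1+δ⁻¹) * Cper^2 * E^2) :=
            mul_le_mul_of_nonneg_left hred hβpos.le
        _ = β * (1+δ) * ηn^2 - β * (1+δ) * (1-lam) * μn^2
              + β * ((1 + δ⁻¹) * Cper^2) * E^2 := by ring
        _ = β * (1+δ) * ηn^2 - β * (1+δ) * (1-lam) * μn^2 + E^2 := by rw [hE2]
    linarith
  have hμθ : θ^2 * ηn^2 ≤ μn^2 := by
    nlinarith [mul_le_mul hdorf hdorf (by positivity) hμn]
  have heC : en^2 ≤ Cup^2 * ηn^2 := by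
    nlinarith [mul_le_mul hup hup hen (by positivity : (0:ℝ) ≤ Cup * ηn)]
  set A := 1 - β * (1+δ) * (1-lam) * t * (θ/Cup)^2 with hA
  set B := (1+δ) * (1 - (1-lam) * (1-t) * θ^2) with hB
  have hcoef : en^2 + β * (1+δ) * ηn^2 - β * (1+δ) * (1-lam) * μn^2 ≤
      A * en^2 + β * B * ηn^2 := by
    have hd : (θ/Cup)^2 = θ^2 / Cup^2 := by rw [div_pow]
    have key : t * (θ/Cup)^2 * en^2 + (1-t) * θ^2 * ηn^2 ≤ μn^2 := by
      have h3 : (θ/Cup)^2 * en^2 ≤ θ^2 * ηn^2 := by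
        calc (θ/Cup)^2 * en^2 ≤ (θ/Cup)^2 * (Cup^2 * ηn^2) :=
              mul_le_mul_of_nonneg_left heC (by positivity)
          _ = θ^2 * ηn^2 := by field_simp
      linarith [hμθ, mul_le_mul_of_nonneg_left h3 ht0.le]
    have hlam' : 0 < 1 - lam := by linarith
    have hc : 0 ≤ β * (1+δ) * (1-lam) := by positivity
    have hkey2 := mul_le_mul_of_nonneg_left key hc
    simp only [hA, hB]
    nlinarith [hkey2]
  have hM1 : A ≤ max A B := le_max_left _ _
  have hM2 : B ≤ max A B := le_max_right _ _
  calc en1^2 + β * ηn1^2 ≤ A * en^2 + β * B * ηn^2 := le_trans h1 hcoef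
    _ ≤ max A B * en^2 + β * (max A B) * ηn^2 := by
        have := mul_le_mul_of_nonneg_right hM1 (sq_nonneg en)
        have := mul_le_mul_of_nonneg_right (mul_le_mul_of_nonneg_left hM2 hβpos.le)
          (sq_nonneg ηn)
        linarith
    _ = max A B * (en^2 + β * ηn^2) := by ring
end

section
/- Suppose nonnegative reals satisfy the following. Let μ = (θ*² − θ_D²)/(2θ*²) with θ_D ∈ (0, θ*) and θ*² = 1/(1 + 4C_lb(C_lub + C_osc + 1)). Assume η_T² ≤ C_lb(A² + O²), A*² + O*² ≤ μ(A² + O²), D² ≤ C_lub(η_R² + τ²η_T²), A² − A*² = D² (orthogonality), O² − O*² ≤ O_R², O_R² ≤ 2 osc_R² + 2C_osc τ² η_T², osc_R ≤ η_R, and τ² ≤ θ*². Then η_R² ≥ θ_D² η_T². -/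
theorem stmt_12 (Clb Club Cosc θstar θD μ τ : ℝ)
    (ηT ηR A A' D O O' OR oscR : ℝ)
    (hClb : 0 < Clb) (hClub : 0 < Club) (hCosc : 0 < Cosc)
    (hθstar : θstar^2 = 1 / (1 + 4 * Clb * (Club + Cosc + 1)))
    (hθstarpos : 0 < θstar)
    (hθD0 : 0 < θD) (hθD1 : θD < θstar)
    (hμ : μ = (θstar^2 - θD^2) / (2 * θstar^2))
    (hηT : 0 ≤ ηT) (hηR : 0 ≤ ηR) (hA : 0 ≤ A) (hA' : 0 ≤ A') (hD : 0 ≤ D)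
    (hO : 0 ≤ O) (hO' : 0 ≤ O') (hOR : 0 ≤ OR) (hoscR : 0 ≤ oscR) (hτ : 0 ≤ τ)
    (hlb : ηT^2 ≤ Clb * (A^2 + O^2))
    (hfine : A'^2 + O'^2 ≤ μ * (A^2 + O^2))
    (hlub : D^2 ≤ Club * (ηR^2 + τ^2 * ηT^2))
    (horth : A^2 - A'^2 = D^2)
    (hoscdiff : O^2 - O'^2 ≤ OR^2)
    (hoscbound : OR^2 ≤ 2 * oscR^2 + 2 * Cosc * τ^2 * ηT^2)
    (hoscle : oscR ≤ ηR)
    (hτsmall : τ^2 ≤ θstar^2) :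
    θD^2 * ηT^2 ≤ ηR^2 := by
  have hKpos : 0 < 1 + 4 * Clb * (Club + Cosc + 1) := by positivity
  have hspos : 0 < θstar ^ 2 := by positivity
  have hs : θstar ^ 2 * (1 + 4 * Clb * (Club + Cosc + 1)) = 1 := by
    rw [hθstar]; field_simp
  have hmu2 : μ * (2 * θstar ^ 2) = θstar ^ 2 - θD ^ 2 := by
    rw [hμ]; field_simp
  have hθDlt : θD ^ 2 < θstar ^ 2 :=
    pow_lt_pow_left₀ hθD1 hθD0.le (by norm_num)
  have hmule : μ ≤ 1 := by
    rw [hμ, div_le_one (by positivity)]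
    nlinarith [sq_nonneg θD, hspos]
  have hτη : τ ^ 2 * ηT ^ 2 ≤ θstar ^ 2 * ηT ^ 2 :=
    mul_le_mul_of_nonneg_right hτsmall (sq_nonneg ηT)
  have hosc2 : oscR ^ 2 ≤ ηR ^ 2 := pow_le_pow_left₀ hoscR hoscle 2
  -- quasi-orthogonality chain
  have h1 : (1 - μ) * (A ^ 2 + O ^ 2) ≤ D ^ 2 + OR ^ 2 := by
    have e : (1 - μ) * (A ^ 2 + O ^ 2) = A ^ 2 + O ^ 2 - μ * (A ^ 2 + O ^ 2) := by ring
    rw [e]; linarith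
  have h2 : D ^ 2 + OR ^ 2 ≤
      (Club + 2) * ηR ^ 2 + (Club + 2 * Cosc) * (θstar ^ 2 * ηT ^ 2) := by
    have hlub' : D ^ 2 ≤ Club * ηR ^ 2 + Club * (τ ^ 2 * ηT ^ 2) := by
      have e : Club * (ηR ^ 2 + τ ^ 2 * ηT ^ 2)
          = Club * ηR ^ 2 + Club * (τ ^ 2 * ηT ^ 2) := by ring
      linarith [hlub, e.symm.le, e.le]
    have hm1 : Club * (τ ^ 2 * ηT ^ 2) ≤ Club * (θstar ^ 2 * ηT ^ 2) :=
      mul_le_mul_of_nonneg_left hτη hClub.le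
    have hm2 : 2 * Cosc * (τ ^ 2 * ηT ^ 2) ≤ 2 * Cosc * (θstar ^ 2 * ηT ^ 2) :=
      mul_le_mul_of_nonneg_left hτη (by positivity)
    have e2 : (Club + 2) * ηR ^ 2 + (Club + 2 * Cosc) * (θstar ^ 2 * ηT ^ 2)
        = Club * ηR ^ 2 + 2 * ηR ^ 2 + Club * (θstar ^ 2 * ηT ^ 2)
          + 2 * Cosc * (θstar ^ 2 * ηT ^ 2) := by ring
    have e3 : 2 * Cosc * τ ^ 2 * ηT ^ 2 = 2 * Cosc * (τ ^ 2 * ηT ^ 2) := by ring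
    rw [e2]; rw [e3] at hoscbound
    linarith [hm1, hm2, hlub', hoscbound, hosc2]
  have h3 : (1 - μ) * ηT ^ 2 ≤
      Clb * ((Club + 2) * ηR ^ 2 + (Club + 2 * Cosc) * (θstar ^ 2 * ηT ^ 2)) := by
    have ha : (1 - μ) * ηT ^ 2 ≤ (1 - μ) * (Clb * (A ^ 2 + O ^ 2)) :=
      mul_le_mul_of_nonneg_left hlb (by linarith)
    have hb : Clb * ((1 - μ) * (A ^ 2 + O ^ 2)) ≤ Clb * (D ^ 2 + OR ^ 2) :=
      mul_le_mul_of_nonneg_left h1 hClb.le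
    have hc : Clb * (D ^ 2 + OR ^ 2) ≤
        Clb * ((Club + 2) * ηR ^ 2 + (Club + 2 * Cosc) * (θstar ^ 2 * ηT ^ 2)) :=
      mul_le_mul_of_nonneg_left h2 hClb.le
    calc (1 - μ) * ηT ^ 2 ≤ (1 - μ) * (Clb * (A ^ 2 + O ^ 2)) := ha
      _ = Clb * ((1 - μ) * (A ^ 2 + O ^ 2)) := by ring
      _ ≤ Clb * (D ^ 2 + OR ^ 2) := hb
      _ ≤ _ := hc
  -- coefficient inequality
  have hcoef : Clb * (Club + 2) * θD ^ 2 + Clb * (Club + 2 * Cosc) * θstar ^ 2 ≤ 1 - μ := by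
    have hst : 2 * θstar ^ 2 * Clb * (Club + 2) * θD ^ 2
        ≤ 2 * θstar ^ 2 * Clb * (Club + 2) * θstar ^ 2 :=
      mul_le_mul_of_nonneg_left hθDlt.le (by positivity)
    have key : (Clb * (Club + 2) * θD ^ 2 + Clb * (Club + 2 * Cosc) * θstar ^ 2)
          * (2 * θstar ^ 2)
        ≤ 4 * Clb * (Club + Cosc + 1) * (θstar ^ 2 * θstar ^ 2) := by
      linarith [hst]
    have he : 4 * Clb * (Club + Cosc + 1) * (θstar ^ 2 * θstar ^ 2)
        = θstar ^ 2 - θstar ^ 2 * θstar ^ 2 := by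
      linear_combination θstar ^ 2 * hs
    have hA1 : (Clb * (Club + 2) * θD ^ 2 + Clb * (Club + 2 * Cosc) * θstar ^ 2)
        * (2 * θstar ^ 2) ≤ θstar ^ 2 + θD ^ 2 := by
      linarith [key, he.le, mul_pos hspos hspos, sq_nonneg θD]
    have e4 : (1 - μ) * (2 * θstar ^ 2) = θstar ^ 2 + θD ^ 2 := by
      linear_combination -hmu2
    have hB : (Clb * (Club + 2) * θD ^ 2 + Clb * (Club + 2 * Cosc) * θstar ^ 2)
        * (2 * θstar ^ 2) ≤ (1 - μ) * (2 * θstar ^ 2) := by rw [e4]; exact hA1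
    exact le_of_mul_le_mul_right hB (by positivity)
  have hc2 : (Clb * (Club + 2) * θD ^ 2 + Clb * (Club + 2 * Cosc) * θstar ^ 2) * ηT ^ 2
      ≤ (1 - μ) * ηT ^ 2 := mul_le_mul_of_nonneg_right hcoef (sq_nonneg ηT)
  have hfinal : Clb * (Club + 2) * (θD ^ 2 * ηT ^ 2) ≤ Clb * (Club + 2) * ηR ^ 2 := by
    linarith [hc2, h3]
  have hpos : 0 < Clb * (Club + 2) := by positivity
  exact le_of_mul_le_mul_left hfinal hpos
end
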